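/- Let d ≥ 2 be even, k ≥ 2, n ≥ 2, and let 𝒞(n) ⊆ F(ℝ^d,k)^n be the set of n-tuples (C_1,…,C_n) of colinear configurations with L_{C_1} = L_{C_2} = ⋯ = L_{C_n}. Then there is a continuous section Γ̄_n : 𝒞(n) → P(F(ℝ^d,k)) of the evaluation map e_n over 𝒞(n), given by concatenating the paths Γ̄(C_i, C_{i+1}) for i = 1,…,n−1, where Γ̄ is the explicit continuous section of e_2 over pairs of colinear configurations with a common line (constructed using the unit tangent vector field v(x_1,y_1,…,x_ℓ,y_ℓ) = (−y_1,x_1,…,−y_ℓ,x_ℓ) on S^{d−1}, d = 2ℓ). -/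

import Mathlib

/-!
For even `d` the field `v(x_1, y_1, …) = (-y_1, x_1, …)` satisfies `⟪x, v x⟫ = 0` and `v x ≠ 0`
for `x ≠ 0`, so `v(e_C)` is a nonzero vector orthogonal to the common line `L`. At every time
`t ∈ (0, 1)` the `i`-th point of `Γ̄(C, C')` is a point of `L` moved by `s (i + 1) v(e_C)` with one
scalar `s ≠ 0`, so the inner product with `v(e_C)` separates the points; at `t = 0, 1` we are at
`C` or `C'`. Hence every `Γ̄(C, C')(t)` is a configuration. Consecutive paths `Γ̄(C_j, C_{j+1})`
and `Γ̄(C_{j+1}, C_{j+2})` meet at `C_{j+1}`, so the concatenation is continuous by gluing along the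
finite closed cover of `[0, 1]` by the intervals `[j/(n-1), (j+1)/(n-1)]`.
-/

open unitInterval

noncomputable section

/-- Euclidean space ℝ^d. -/
abbrev E (d : ℕ) : Type := EuclideanSpace ℝ (Fin d)

/-- The ordered configuration space F(ℝ^d, k) of k distinct points in ℝ^d,
viewed as the subspace of (ℝ^d)^k of injective tuples. -/
def Conf (d k : ℕ) : Set (Fin k → E d) := {x | Function.Injective x}

/-- The time i/(n-1) ∈ [0,1] at which the i-th configuration is visited. -/
def eTime (n : ℕ) (i : Fin n) : unitInterval :=
  Set.projIcc 0 1 zero_le_one ((i : ℝ) / ((n : ℝ) - 1))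

/-- The evaluation map e_n : P(X) → X^n,
e_n(γ) = (γ(0), γ(1/(n-1)), …, γ((n-2)/(n-1)), γ(1)). -/
def evalMap {X : Type*} [TopologicalSpace X] (n : ℕ) (γ : C(unitInterval, X)) : Fin n → X :=
  fun i => γ (eTime n i)

/-- `A ⊆ X^n` admits a continuous section of the evaluation map e_n. -/
def HasSec {X : Type*} [TopologicalSpace X] (n : ℕ) (A : Set (Fin n → X)) : Prop :=
  ∃ s : A → C(unitInterval, X), Continuous s ∧ ∀ a : A, evalMap n (s a) = (a : Fin n → X)

/-- The orienting unit vector e_C = (x_2 - x_1)/|x_2 - x_1| of the line L_C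
through x_1 and x_2. -/
def eV {d k : ℕ} (hk : 2 ≤ k) (C : Fin k → E d) : E d :=
  ‖C ⟨1, by omega⟩ - C ⟨0, by omega⟩‖⁻¹ • (C ⟨1, by omega⟩ - C ⟨0, by omega⟩)

/-- The orthogonal projection p_C : ℝ^d → L_C onto the affine line L_C
through x_1 and x_2. -/
def pC {d k : ℕ} (hk : 2 ≤ k) (C : Fin k → E d) (x : E d) : E d :=
  C ⟨0, by omega⟩ + (inner ℝ (x - C ⟨0, by omega⟩) (eV hk C) : ℝ) • eV hk C

/-- c̄p(C) = cardinality of {p_C(x_1),…,p_C(x_k)}. -/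
def cpBar {d k : ℕ} (hk : 2 ≤ k) (C : Fin k → E d) : ℕ :=
  (Set.range fun i => pC hk C (C i)).ncard

/-- The affine line L_C through x_1 and x_2. -/
def lineC {d k : ℕ} (hk : 2 ≤ k) (C : Fin k → E d) : Set (E d) :=
  {y | ∃ r : ℝ, y = C ⟨0, by omega⟩ + r • eV hk C}

/-- C is colinear: all its points lie on L_C. -/
def Colin {d k : ℕ} (hk : 2 ≤ k) (C : Fin k → E d) : Prop :=
  ∀ i : Fin k, C i ∈ lineC hk C

/-- The unit tangent vector field v on S^{d-1} for even d = 2ℓ: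
v(x_1,y_1,…,x_ℓ,y_ℓ) = (-y_1,x_1,…,-y_ℓ,x_ℓ). -/
def vf {d : ℕ} (hd : Even d) (x : E d) : E d :=
  (WithLp.equiv 2 (Fin d → ℝ)).symm fun j =>
    if h : (j : ℕ) % 2 = 0 then -(x ⟨(j : ℕ) + 1, by obtain ⟨r, hr⟩ := hd; omega⟩)
    else x ⟨(j : ℕ) - 1, by omega⟩

/-- The i-th component of the path Γ̄^{C,C'} (the paper index i ∈ {1,…,k}
corresponds to (i:ℕ)+1 for i : Fin k): x_i + 3ti·v(e_C) on [0,1/3];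
x_i + i·v(e_C) + (3t-1)(x'_i - x_i) on [1/3,2/3]; x'_i + i(3-3t)·v(e_C)
on [2/3,1]. -/
def gammaBar {d k : ℕ} (hd : Even d) (hk : 2 ≤ k) (C C' : Fin k → E d)
    (i : Fin k) (t : ℝ) : E d :=
  if t ≤ 1 / 3 then C i + (3 * t * ((i : ℝ) + 1)) • vf hd (eV hk C)
  else if t ≤ 2 / 3 then C i + ((i : ℝ) + 1) • vf hd (eV hk C) + (3 * t - 1) • (C' i - C i)
  else C' i + (((i : ℝ) + 1) * (3 - 3 * t)) • vf hd (eV hk C)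


/-- The set 𝒞(n) of n-tuples of colinear configurations with a common line
L_{C_1} = ⋯ = L_{C_n}. -/
def Ctup (d k n : ℕ) (hk : 2 ≤ k) (hn : 2 ≤ n) : Set (Fin n → (Fin k → E d)) :=
  {C | (∀ m : Fin n, C m ∈ Conf d k ∧ Colin hk (C m)) ∧
    ∀ m : Fin n, lineC hk (C m) = lineC hk (C ⟨0, by omega⟩)}

/-- The concatenation Γ̄_n(C_1,…,C_n) = Γ̄(C_1,C_2)·⋯·Γ̄(C_{n-1},C_n), the i-th
constituent path traversed on [(i-1)/(n-1), i/(n-1)]. -/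
def gammaBarN {d k n : ℕ} (hd : Even d) (hk : 2 ≤ k) (hn : 2 ≤ n)
    (C : Fin n → (Fin k → E d)) (t : ℝ) : Fin k → E d :=
  let j : ℕ := min (⌊t * ((n : ℝ) - 1)⌋₊) (n - 2)
  fun i => gammaBar hd hk (C ⟨j, by omega⟩) (C ⟨j + 1, by omega⟩) i
    (t * ((n : ℝ) - 1) - (j : ℝ))

section PairSwap

variable {d : ℕ}

def pairSwap (hd : Even d) (j : Fin d) : Fin d :=
  if h : (j : ℕ) % 2 = 0 then ⟨(j : ℕ) + 1, by obtain ⟨r, hr⟩ := hd; omega⟩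
  else ⟨(j : ℕ) - 1, by omega⟩

def pairSign (j : Fin d) : ℝ := if (j : ℕ) % 2 = 0 then -1 else 1

lemma val_pairSwap (hd : Even d) (j : Fin d) :
    (pairSwap hd j : ℕ) = if (j : ℕ) % 2 = 0 then (j : ℕ) + 1 else (j : ℕ) - 1 := by
  unfold pairSwap
  split_ifs <;> rfl

lemma pairSwap_involutive (hd : Even d) : Function.Involutive (pairSwap hd) := by
  intro j
  ext
  rw [val_pairSwap, val_pairSwap]
  split_ifs <;> omega

lemma pairSwap_ne (hd : Even d) (j : Fin d) : pairSwap hd j ≠ j := by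
  rw [Ne, Fin.ext_iff, val_pairSwap]
  split_ifs <;> omega

lemma pairSign_pairSwap (hd : Even d) (j : Fin d) : pairSign (pairSwap hd j) = -pairSign j := by
  unfold pairSign
  rw [val_pairSwap]
  split_ifs <;> first | omega | norm_num

lemma pairSign_ne_zero (j : Fin d) : pairSign j ≠ 0 := by
  unfold pairSign
  split_ifs <;> norm_num

lemma vf_apply (hd : Even d) (x : E d) (j : Fin d) :
    vf hd x j = pairSign j * x (pairSwap hd j) := by
  unfold vf pairSign pairSwap
  split_ifs <;> simp_all

end PairSwap

section VectorField

variable {d : ℕ} (hd : Even d)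

lemma inner_self_vf (x : E d) : inner ℝ x (vf hd x) = 0 := by
  rw [PiLp.inner_apply]
  refine Finset.sum_ninvolution (pairSwap hd) (fun j => ?_) (fun j _ => pairSwap_ne hd j)
    (fun _ => Finset.mem_univ _) (pairSwap_involutive hd)
  simp only [vf_apply, pairSwap_involutive hd j, pairSign_pairSwap, RCLike.inner_apply,
    conj_trivial]
  ring

lemma vf_ne_zero {x : E d} (hx : x ≠ 0) : vf hd x ≠ 0 := by
  contrapose! hx
  ext j
  have h := congrArg (fun y : E d => y (pairSwap hd j)) hx
  simpa [vf_apply, pairSwap_involutive hd j, pairSign_ne_zero] using h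

lemma continuous_vf : Continuous (vf hd) := by
  refine (PiLp.continuous_toLp _ _).comp (continuous_pi fun j => ?_)
  split_ifs
  · exact ((continuous_apply _).comp (PiLp.continuous_ofLp 2 _)).neg
  · exact (continuous_apply _).comp (PiLp.continuous_ofLp 2 _)

end VectorField

lemma injective_add_smul_of_inner_eq {F ι : Type*} [NormedAddCommGroup F] [InnerProductSpace ℝ F]
    {a : ι → F} {v : F} {c : ℝ} {f : ι → ℝ} (hv : v ≠ 0) (ha : ∀ i, inner ℝ (a i) v = c)
    (hf : Function.Injective f) : Function.Injective fun i => a i + f i • v := by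
  intro i j hij
  have h := congrArg (fun y => inner ℝ y v) hij
  simp only [inner_add_left, real_inner_smul_left, ha] at h
  exact hf (mul_right_cancel₀ (inner_self_ne_zero.mpr hv) (add_left_cancel h))

lemma injective_mul_succ {k : ℕ} {c : ℝ} (hc : c ≠ 0) :
    Function.Injective fun i : Fin k => c * ((i : ℝ) + 1) :=
  (mul_right_injective₀ hc).comp <|
    (add_left_injective 1).comp (Nat.cast_injective.comp Fin.val_injective)

section Configurations

variable {d k : ℕ} (hk : 2 ≤ k)

lemma sub_ne_zero_of_mem_Conf {C : Fin k → E d} (hC : C ∈ Conf d k) :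
    C ⟨1, by omega⟩ - C ⟨0, by omega⟩ ≠ 0 :=
  sub_ne_zero.mpr fun h => absurd (hC h) (by simp [Fin.ext_iff])

lemma eV_ne_zero {C : Fin k → E d} (hC : C ∈ Conf d k) : eV hk C ≠ 0 :=
  smul_ne_zero (inv_ne_zero (norm_ne_zero_iff.mpr (sub_ne_zero_of_mem_Conf hk hC)))
    (sub_ne_zero_of_mem_Conf hk hC)

lemma inner_vf_eV_of_mem_lineC (hd : Even d) {C : Fin k → E d} {y : E d}
    (hy : y ∈ lineC hk C) :
    inner ℝ y (vf hd (eV hk C)) = inner ℝ (C ⟨0, by omega⟩) (vf hd (eV hk C)) := by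
  obtain ⟨r, rfl⟩ := hy
  rw [inner_add_left, real_inner_smul_left, inner_self_vf, mul_zero, add_zero]

lemma injective_gammaBar (hd : Even d) {C C' : Fin k → E d} (hC : C ∈ Conf d k)
    (hC' : C' ∈ Conf d k) (hcol : Colin hk C) (hC'line : ∀ i, C' i ∈ lineC hk C) {t : ℝ}
    (ht0 : 0 ≤ t) (ht1 : t ≤ 1) : Function.Injective fun i => gammaBar hd hk C C' i t := by
  have hv := vf_ne_zero hd (eV_ne_zero hk hC)
  have hCv (i : Fin k) := inner_vf_eV_of_mem_lineC hk hd (hcol i)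
  have hC'v (i : Fin k) := inner_vf_eV_of_mem_lineC hk hd (hC'line i)
  unfold gammaBar
  split_ifs
  · rcases ht0.eq_or_lt with rfl | ht
    · simp only [mul_zero, zero_mul, zero_smul, add_zero]
      exact hC
    · exact injective_add_smul_of_inner_eq hv hCv (injective_mul_succ (by positivity))
  · have := injective_add_smul_of_inner_eq (a := fun i => C i + (3 * t - 1) • (C' i - C i)) hv
      (fun i => by rw [inner_add_left, real_inner_smul_left, inner_sub_left, hCv, hC'v, sub_self,
        mul_zero, add_zero]) (injective_mul_succ one_ne_zero)
    convert this using 2 with i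
    simp only [one_mul]
    abel
  · rcases ht1.eq_or_lt with rfl | ht
    · simp only [mul_one, sub_self, mul_zero, zero_smul, add_zero]
      exact hC'
    · have := injective_add_smul_of_inner_eq hv hC'v
        (injective_mul_succ (k := k) (sub_ne_zero.mpr (by linarith : (3 : ℝ) ≠ 3 * t)))
      simpa only [mul_comm] using this

end Configurations

lemma continuousOn_eV {d k : ℕ} (hk : 2 ≤ k) : ContinuousOn (eV hk) (Conf d k) := by
  have hsub : Continuous fun C : Fin k → E d => C ⟨1, by omega⟩ - C ⟨0, by omega⟩ := by fun_prop
  exact (hsub.norm.continuousOn.inv₀ fun C hC => norm_ne_zero_iff.mpr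
    (sub_ne_zero_of_mem_Conf hk hC)).smul hsub.continuousOn

lemma continuous_gammaBar {d k : ℕ} (hd : Even d) (hk : 2 ≤ k) {X : Type*}
    [TopologicalSpace X] {f g : X → Fin k → E d} {u : X → ℝ} (hf : Continuous f)
    (hg : Continuous g) (hu : Continuous u) (hfC : ∀ x, f x ∈ Conf d k) (i : Fin k) :
    Continuous fun x => gammaBar hd hk (f x) (g x) i (u x) := by
  have hv : Continuous fun x => vf hd (eV hk (f x)) :=
    (continuous_vf hd).comp ((continuousOn_eV hk).comp_continuous hf hfC)
  refine Continuous.if_le (by fun_prop) (Continuous.if_le (by fun_prop) (by fun_prop) hu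
    continuous_const fun x hx => ?_) hu continuous_const fun x hx => ?_
  · rw [hx]
    norm_num
    abel
  · rw [hx, if_pos (by norm_num)]
    norm_num

lemma exists_mem_piece {n : ℕ} (hn : 2 ≤ n) {t : ℝ} (ht0 : 0 ≤ t) (ht1 : t ≤ 1) :
    ∃ j : ℕ, j ≤ n - 2 ∧ (j : ℝ) ≤ t * ((n : ℝ) - 1) ∧ t * ((n : ℝ) - 1) ≤ j + 1 := by
  have hn' : (2 : ℝ) ≤ n := by exact_mod_cast hn
  have hw0 : 0 ≤ t * ((n : ℝ) - 1) := mul_nonneg ht0 (by linarith)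
  refine ⟨min ⌊t * ((n : ℝ) - 1)⌋₊ (n - 2), min_le_right _ _,
    (Nat.cast_le.mpr (min_le_left _ _)).trans (Nat.floor_le hw0), ?_⟩
  rcases le_total ⌊t * ((n : ℝ) - 1)⌋₊ (n - 2) with h | h
  · rw [min_eq_left h]
    exact (Nat.lt_floor_add_one _).le
  · rw [min_eq_right h, Nat.cast_sub (by omega)]
    push_cast
    nlinarith

section Concatenation

variable {d k n : ℕ} (hd : Even d) (hk : 2 ≤ k) (hn : 2 ≤ n)

lemma gammaBar_zero (C C' : Fin k → E d) (i : Fin k) : gammaBar hd hk C C' i 0 = C i := by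
  simp [gammaBar]

lemma gammaBar_one (C C' : Fin k → E d) (i : Fin k) : gammaBar hd hk C C' i 1 = C' i := by
  rw [gammaBar, if_neg (by norm_num), if_neg (by norm_num)]
  norm_num

lemma min_floor_eq_or {j : ℕ} {w : ℝ} (hjn : j ≤ n - 2) (h0 : (j : ℝ) ≤ w) (h1 : w ≤ j + 1) :
    min ⌊w⌋₊ (n - 2) = j ∨ (min ⌊w⌋₊ (n - 2) = j + 1 ∧ w = j + 1) := by
  have hl : j ≤ ⌊w⌋₊ := Nat.le_floor h0
  have hu : ⌊w⌋₊ ≤ j + 1 := Nat.floor_le_of_le (by exact_mod_cast h1)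
  by_cases h : ⌊w⌋₊ = j + 1 ∧ j < n - 2
  · refine Or.inr ⟨by omega, le_antisymm h1 ?_⟩
    have := Nat.floor_le (h0.trans' (Nat.cast_nonneg j))
    rwa [h.1, Nat.cast_succ] at this
  · exact Or.inl (by omega)

lemma gammaBarN_eq_of_min_floor_eq (C : Fin n → Fin k → E d) {t : ℝ} {m : ℕ}
    (hm : min ⌊t * ((n : ℝ) - 1)⌋₊ (n - 2) = m) :
    gammaBarN hd hk hn C t = fun i =>
      gammaBar hd hk (C ⟨m, by omega⟩) (C ⟨m + 1, by omega⟩) i (t * ((n : ℝ) - 1) - m) := by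
  subst hm
  rfl

lemma gammaBarN_eq_of_mem_Icc (C : Fin n → Fin k → E d) {t : ℝ} {j : ℕ} (hjn : j ≤ n - 2)
    (h0 : (j : ℝ) ≤ t * ((n : ℝ) - 1)) (h1 : t * ((n : ℝ) - 1) ≤ j + 1) :
    gammaBarN hd hk hn C t = fun i =>
      gammaBar hd hk (C ⟨j, by omega⟩) (C ⟨j + 1, by omega⟩) i (t * ((n : ℝ) - 1) - j) := by
  rcases min_floor_eq_or hjn h0 h1 with hm | ⟨hm, hw⟩
  · exact gammaBarN_eq_of_min_floor_eq hd hk hn C hm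
  · rw [gammaBarN_eq_of_min_floor_eq hd hk hn C hm]
    funext i
    rw [hw, Nat.cast_succ, sub_self, add_sub_cancel_left, gammaBar_zero, gammaBar_one]

lemma gammaBarN_mem_Conf {C : Fin n → Fin k → E d} (hC : C ∈ Ctup d k n hk hn) {t : ℝ}
    (ht0 : 0 ≤ t) (ht1 : t ≤ 1) : gammaBarN hd hk hn C t ∈ Conf d k := by
  obtain ⟨j, hjn, h0, h1⟩ := exists_mem_piece hn ht0 ht1
  rw [gammaBarN_eq_of_mem_Icc hd hk hn C hjn h0 h1]
  obtain ⟨⟨hCj, hcol⟩, hC'j, hcol'⟩ := And.intro (hC.1 ⟨j, by omega⟩) (hC.1 ⟨j + 1, by omega⟩)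
  have hline := (hC.2 ⟨j + 1, by omega⟩).trans (hC.2 ⟨j, by omega⟩).symm
  exact injective_gammaBar hk hd hCj hC'j hcol (fun i => hline ▸ hcol' i)
    (by linarith) (by linarith)

lemma gammaBarN_eTime (C : Fin n → Fin k → E d) (i : Fin n) :
    gammaBarN hd hk hn C (eTime n i) = C i := by
  have hn' : (2 : ℝ) ≤ n := by exact_mod_cast hn
  have hi : ((i : ℕ) : ℝ) ≤ n - 1 := by
    rw [le_sub_iff_add_le]
    exact_mod_cast i.isLt
  have hw : ((i : ℕ) : ℝ) / ((n : ℝ) - 1) * ((n : ℝ) - 1) = i :=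
    div_mul_cancel₀ _ (by linarith)
  rw [eTime, Set.projIcc_of_mem _
    ⟨div_nonneg (Nat.cast_nonneg _) (by linarith), (div_le_one (by linarith)).mpr hi⟩]
  by_cases hin : (i : ℕ) ≤ n - 2
  · rw [gammaBarN_eq_of_mem_Icc hd hk hn C hin hw.ge (by linarith)]
    funext m
    rw [hw, sub_self, gammaBar_zero]
  · have hi' : (i : ℕ) = n - 2 + 1 := by omega
    have hcast : ((n - 2 : ℕ) : ℝ) + 1 = i := by rw [hi']; push_cast; ring
    rw [gammaBarN_eq_of_mem_Icc hd hk hn C le_rfl (by linarith) (by linarith)]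
    funext m
    rw [hw, ← hcast, add_sub_cancel_left, gammaBar_one]
    simp only [← hi']

lemma continuous_gammaBarN :
    Continuous fun p : Ctup d k n hk hn × unitInterval =>
      gammaBarN hd hk hn (p.1 : Fin n → Fin k → E d) p.2 := by
  have hw : Continuous fun p : Ctup d k n hk hn × unitInterval => (p.2 : ℝ) * ((n : ℝ) - 1) :=
    by fun_prop
  let piece (j : Fin (n - 1)) : Set (Ctup d k n hk hn × unitInterval) :=
    {p | ((j : ℕ) : ℝ) ≤ (p.2 : ℝ) * ((n : ℝ) - 1) ∧ (p.2 : ℝ) * ((n : ℝ) - 1) ≤ (j : ℕ) + 1}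
  refine (locallyFinite_of_finite piece).continuous ?_
    (fun j => (isClosed_le continuous_const hw).inter (isClosed_le hw continuous_const))
    (fun j => ?_)
  · refine Set.eq_univ_of_forall fun p => ?_
    obtain ⟨j, hjn, h0, h1⟩ := exists_mem_piece hn p.2.2.1 p.2.2.2
    exact Set.mem_iUnion.mpr ⟨⟨j, by omega⟩, h0, h1⟩
  · have hjn : (j : ℕ) ≤ n - 2 := by omega
    have hC (m : Fin n) : Continuous fun p : Ctup d k n hk hn × unitInterval => p.1.1 m :=
      (continuous_apply m).comp (continuous_subtype_val.comp continuous_fst)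
    refine ContinuousOn.congr (Continuous.continuousOn (continuous_pi fun i =>
      continuous_gammaBar hd hk (hC _) (hC _) (hw.sub continuous_const)
        (fun p => (p.1.2.1 _).1) i)) fun p hp => gammaBarN_eq_of_mem_Icc hd hk hn _ hjn hp.1 hp.2

end Concatenation

theorem stmt16_general (d k n : ℕ) (hd : Even d) (hk : 2 ≤ k) (hn : 2 ≤ n) :
    ∃ s : ↥(Ctup d k n hk hn) → C(unitInterval, ↥(Conf d k)),
      Continuous s ∧
      (∀ (C : ↥(Ctup d k n hk hn)) (t : unitInterval),
        ((s C t : Fin k → E d)) =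
          gammaBarN hd hk hn ((C : Fin n → (Fin k → E d))) (t : ℝ)) ∧
      (∀ (C : ↥(Ctup d k n hk hn)) (i : Fin n),
        (s C (eTime n i) : Fin k → E d) = (C : Fin n → (Fin k → E d)) i) := by
  let F : C(Ctup d k n hk hn × unitInterval, Conf d k) :=
    ⟨fun p => ⟨gammaBarN hd hk hn p.1 p.2, gammaBarN_mem_Conf hd hk hn p.1.2 p.2.2.1 p.2.2.2⟩,
      (continuous_gammaBarN hd hk hn).subtype_mk _⟩
  exact ⟨F.curry, F.curry.continuous, fun _ _ => rfl,
    fun C i => gammaBarN_eTime hd hk hn C i⟩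

/-- For even d ≥ 2 and k, n ≥ 2, concatenating the explicit
two-point planners Γ̄(C_i, C_{i+1}) yields a continuous section
Γ̄_n : 𝒞(n) → P(F(ℝ^d,k)) of the evaluation map e_n over 𝒞(n). -/
theorem stmt16 (d k n : ℕ) (hd2 : 2 ≤ d) (hd : Even d) (hk : 2 ≤ k) (hn : 2 ≤ n) :
    ∃ s : ↥(Ctup d k n hk hn) → C(unitInterval, ↥(Conf d k)),
      Continuous s ∧
      (∀ (C : ↥(Ctup d k n hk hn)) (t : unitInterval),
        ((s C t : Fin k → E d)) =
          gammaBarN hd hk hn ((C : Fin n → (Fin k → E d))) (t : ℝ)) ∧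
      (∀ (C : ↥(Ctup d k n hk hn)) (i : Fin n),
        (s C (eTime n i) : Fin k → E d) = (C : Fin n → (Fin k → E d)) i) :=
  stmt16_general d k n hd hk hn
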